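/- arXiv:2603.22579 — 4 statements merged into one kernel-verified Lean document; each statement's English description precedes it below -/
import Mathlib

section
/- Norm descent lemma: For all ordinals β, δ in a nested fundamental-sequence system, if β < δ then β ≤ δ[|β|], where |β| = min{n > 1 : Λ ⇒_n β} is the norm of β and Λ ⇒_n β means β is obtained from the top ordinal Λ by finitely many applications of the map γ ↦ γ[n]. -/
open Ordinal

/-- The system of fundamental sequences `F` is nested. -/
def Nested (F : Ordinal → ℕ → Ordinal) : Prop :=
  ∀ (γ β : Ordinal) (n : ℕ), 1 < n → γ < β → ¬ (F β n < γ ∧ F γ n < F β n)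

/-- `Reaches F n α β`: `β` is obtained from `α` by finitely many (possibly zero)
applications of the map `γ ↦ γ[n]`. -/
def Reaches (F : Ordinal → ℕ → Ordinal) (n : ℕ) (α β : Ordinal) : Prop :=
  ∃ k : ℕ, (fun γ => F γ n)^[k] α = β

/-- Norm descent lemma: in a nested fundamental-sequence system with top ordinal `Λ`,
if `β < δ` then `β ≤ δ[|β|]`, where `|β| = min {n > 1 : Λ ⇒ₙ β}` is the norm of `β`. -/
theorem norm_descent
    (F : Ordinal → ℕ → Ordinal)
    (h0 : ∀ n : ℕ, F 0 n = 0)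
    (hsucc : ∀ (α : Ordinal) (n : ℕ), F (α + 1) n = α)
    (hself : ∀ (α : Ordinal) (n : ℕ), α ≠ 0 → F α n < α)
    (hnested : Nested F)
    (Λ : Ordinal)
    (Nrm : Ordinal → ℕ)
    (hNrm : ∀ β : Ordinal, β ≤ Λ →
      1 < Nrm β ∧ Reaches F (Nrm β) Λ β ∧
        ∀ n : ℕ, 1 < n → Reaches F n Λ β → Nrm β ≤ n) :
    ∀ β δ : Ordinal, β < δ → δ ≤ Λ → β ≤ F δ (Nrm β) := by

  intro β δ hβδ hδΛ
  obtain ⟨hn1, ⟨k, hk⟩, -⟩ := hNrm β (le_trans hβδ.le hδΛ)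
  set n := Nrm β with hn
  set f := fun γ => F γ n with hf
  have hstep : ∀ x : Ordinal, f x ≤ x := by
    intro x
    rcases eq_or_ne x 0 with rfl | hx
    · simp [hf, h0]
    · exact (hself x n hx).le
  have hmono : ∀ j m : ℕ, j ≤ m → f^[m] Λ ≤ f^[j] Λ := by
    intro j m hjm
    obtain ⟨d, rfl⟩ := Nat.exists_eq_add_of_le hjm
    clear hjm
    rw [Nat.add_comm, Function.iterate_add_apply]
    induction d with
    | zero => simp
    | succ d ih =>
      rw [Function.iterate_succ_apply']
      exact le_trans (hstep _) ih
  have hkδ : f^[k] Λ < δ := hk ▸ hβδ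
  have hne : ∃ i, f^[i] Λ < δ := ⟨k, hkδ⟩
  set i := Nat.find hne with hi
  have hiδ : f^[i] Λ < δ := Nat.find_spec hne
  have hik : i ≤ k := Nat.find_le hkδ
  have hipos : 0 < i := by
    rcases Nat.eq_zero_or_pos i with h | h
    · exfalso
      have := hiδ
      rw [h] at this
      simp at this
      exact absurd this (not_lt_of_ge hδΛ)
    · exact h
  obtain ⟨j, hij⟩ : ∃ j, i = j + 1 := ⟨i - 1, (Nat.succ_pred_eq_of_pos hipos).symm⟩
  rw [hij] at hiδ hik
  have hjδ : δ ≤ f^[j] Λ := le_of_not_gt (Nat.find_min hne (show j < i from hij ▸ Nat.lt_succ_self j))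
  set γ := f^[j] Λ with hγ
  have hβfγ : β ≤ F γ n := by
    have := hmono (j+1) k hik
    rw [hk] at this
    simpa [Function.iterate_succ_apply'] using this
  have hFγδ : F γ n < δ := by
    have := hiδ
    rwa [Function.iterate_succ_apply'] at this
  rcases eq_or_lt_of_le hjδ with h | h
  · rwa [h]
  · have := hnested δ γ n hn1 h
    push_neg at this
    exact hβfγ.trans (this hFγδ)
end

section
/- Downward dimension reduction: over RCA_0, for ordinals β < α (in a nested fundamental-sequence system with a norm function), RT^{!ω^α}_k implies RT^{!ω^β}_k. Specifically, given a coloring c of the ω^β-size subsets of an infinite X, the coloring d of ω^α-size subsets of X \ {0,...,n} (where n = |ω^β| is the norm) defined by d(s) = c(t) for t the unique ω^β-size initial segment of s, is well-defined, and every infinite homogeneous set for d is homogeneous for c. -/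
/-!
If `t` is `ω^β`-size and lies above the norm `|ω^β|`, then `t` minus its maximum is not
`ω^β`-large, hence not `ω^α`-large; so inside an infinite `H` the set `t` can be extended, one new
maximum at a time, to an `ω^α`-size set `s` having `t` as initial segment (the extension terminates
because each step strictly lowers the ordinal `ω^α[·]`). If `d` is constant on the `ω^α`-size
subsets of `H` and `d s = c t`, then `c` is constant on the `ω^β`-size subsets of `H`. For the
implication between the Ramsey statements apply `RT^{!ω^α}_k` to `d(s) := c(t)` with `t` the
unique `ω^β`-size initial segment of `s`.
-/

open Ordinal

/-- `α[s]`: iterate the fundamental sequence `F` along the increasing enumeration of `s`. -/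
def ordIter (F : Ordinal → ℕ → Ordinal) (α : Ordinal) (s : Finset ℕ) : Ordinal :=
  (s.sort (· ≤ ·)).foldl F α

/-- `s` is `α`-large: `α[s] = 0`. -/
def IsLarge (F : Ordinal → ℕ → Ordinal) (α : Ordinal) (s : Finset ℕ) : Prop :=
  ordIter F α s = 0

/-- `s` is exactly `α`-large (`α`-size). -/
def IsSize (F : Ordinal → ℕ → Ordinal) (α : Ordinal) (s : Finset ℕ) : Prop :=
  IsLarge F α s ∧ ∀ h : s.Nonempty, ¬ IsLarge F α (s.erase (s.max' h))

/-- `t` is an initial segment (prefix) of `s` with respect to the increasing enumeration. -/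
def IsPrefixOf (t s : Finset ℕ) : Prop :=
  t ⊆ s ∧ ∀ x ∈ t, ∀ y ∈ s, y ≤ x → y ∈ t

/-- `RT^{!α}_k`. -/
def RTsize (F : Ordinal → ℕ → Ordinal) (α : Ordinal) (k : ℕ) : Prop :=
  ∀ X : Set ℕ, X.Infinite → ∀ c : Finset ℕ → Fin k,
    ∃ H : Set ℕ, H ⊆ X ∧ H.Infinite ∧
      ∃ i : Fin k, ∀ s : Finset ℕ, ↑s ⊆ H → IsSize F α s → c s = i

lemma Finset.sort_insert_of_forall_lt {u : Finset ℕ} {m : ℕ} (h : ∀ x ∈ u, x < m) :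
    (insert m u).sort (· ≤ ·) = u.sort (· ≤ ·) ++ [m] := by
  have hm : m ∉ u := fun hmu => lt_irrefl m (h m hmu)
  have htoFinset : (u.sort (· ≤ ·) ++ [m]).toFinset = insert m u := by
    ext x
    simp
  rw [← htoFinset, List.toFinset_sort _ (by simpa [List.nodup_append] using hm)]
  refine List.pairwise_append.2 ⟨u.pairwise_sort _, List.pairwise_singleton _ _, ?_⟩
  rintro a ha b hb
  rw [List.mem_singleton.1 hb]
  exact (h a ((Finset.mem_sort _).1 ha)).le

lemma Finset.max'_insert_of_forall_lt {u : Finset ℕ} {m : ℕ} (h : ∀ x ∈ u, x < m)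
    (hne : (insert m u).Nonempty) : (insert m u).max' hne = m :=
  le_antisymm
    ((insert m u).max'_le hne m fun y hy =>
      (Finset.mem_insert.1 hy).elim le_of_eq fun hyu => (h y hyu).le)
    ((insert m u).le_max' m (Finset.mem_insert_self m u))

lemma IsPrefixOf.refl (s : Finset ℕ) : IsPrefixOf s s :=
  ⟨subset_rfl, fun _ _ _ hy _ => hy⟩

lemma IsPrefixOf.trans {a b c : Finset ℕ} (hab : IsPrefixOf a b) (hbc : IsPrefixOf b c) :
    IsPrefixOf a c :=
  ⟨hab.1.trans hbc.1, fun x hx y hy hyx => hab.2 x hx y (hbc.2 x (hab.1 hx) y hy hyx) hyx⟩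

lemma isPrefixOf_insert_of_forall_lt {u : Finset ℕ} {m : ℕ} (h : ∀ x ∈ u, x < m) :
    IsPrefixOf u (insert m u) := by
  refine ⟨Finset.subset_insert m u, fun x hx y hy hyx => ?_⟩
  rcases Finset.mem_insert.1 hy with rfl | hyu
  · exact absurd (h x hx) hyx.not_gt
  · exact hyu

section Extension

variable {F : Ordinal → ℕ → Ordinal} {γ : Ordinal}

lemma ordIter_insert_of_forall_lt {u : Finset ℕ} {m : ℕ} (h : ∀ x ∈ u, x < m) :
    ordIter F γ (insert m u) = F (ordIter F γ u) m := by
  rw [ordIter, Finset.sort_insert_of_forall_lt h, List.foldl_append]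
  rfl

lemma isSize_insert_of_forall_lt {u : Finset ℕ} {m : ℕ} (h : ∀ x ∈ u, x < m)
    (hu : ¬IsLarge F γ u) (hlarge : IsLarge F γ (insert m u)) : IsSize F γ (insert m u) := by
  refine ⟨hlarge, fun hne => ?_⟩
  rwa [Finset.max'_insert_of_forall_lt h hne,
    Finset.erase_insert fun hmu => lt_irrefl m (h m hmu)]

theorem exists_isSize_of_not_isLarge (hself : ∀ (α : Ordinal) (n : ℕ), α ≠ 0 → F α n < α)
    {H : Set ℕ} (hH : H.Infinite) (u : Finset ℕ) (huH : ↑u ⊆ H) (hu : ¬IsLarge F γ u) :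
    ∃ s : Finset ℕ, ↑s ⊆ H ∧ IsPrefixOf u s ∧ IsSize F γ s := by
  obtain ⟨m, hmH, hm⟩ := hH.exists_gt (u.sup id)
  have hlt : ∀ x ∈ u, x < m := fun x hx => (Finset.le_sup (f := id) hx).trans_lt hm
  have hinsH : ↑(insert m u) ⊆ H := by
    rw [Finset.coe_insert]
    exact Set.insert_subset hmH huH
  by_cases hlarge : IsLarge F γ (insert m u)
  · exact ⟨insert m u, hinsH, isPrefixOf_insert_of_forall_lt hlt,
      isSize_insert_of_forall_lt hlt hu hlarge⟩
  · obtain ⟨s, hsH, hus, hs⟩ := exists_isSize_of_not_isLarge hself hH (insert m u) hinsH hlarge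
    exact ⟨s, hsH, (isPrefixOf_insert_of_forall_lt hlt).trans hus, hs⟩
termination_by ordIter F γ u
decreasing_by
  rw [ordIter_insert_of_forall_lt hlt]
  exact hself _ m hu

theorem exists_isSize_extension_of_isSize (hself : ∀ (α : Ordinal) (n : ℕ), α ≠ 0 → F α n < α)
    {δ : Ordinal} {H : Set ℕ} (hH : H.Infinite)
    (hlarge : ∀ s : Finset ℕ, ↑s ⊆ H → IsLarge F δ s → IsLarge F γ s)
    {t : Finset ℕ} (htH : ↑t ⊆ H) (ht : IsSize F γ t) :
    ∃ s : Finset ℕ, ↑s ⊆ H ∧ IsPrefixOf t s ∧ IsSize F δ s := by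
  by_cases htδ : IsLarge F δ t
  · refine ⟨t, htH, IsPrefixOf.refl t, htδ, fun hne hδ => ht.2 hne (hlarge _ ?_ hδ)⟩
    exact (Finset.coe_subset.2 (t.erase_subset _)).trans htH
  · exact exists_isSize_of_not_isLarge hself hH t htH htδ

theorem forall_isSize_eq_of_prefix_coloring {ι : Type*}
    (hself : ∀ (α : Ordinal) (n : ℕ), α ≠ 0 → F α n < α) {δ : Ordinal} {N : ℕ}
    (hlarge : ∀ s : Finset ℕ, (∀ x ∈ s, N < x) → IsLarge F δ s → IsLarge F γ s)
    (X : Set ℕ) (c d : Finset ℕ → ι)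
    (hcd : ∀ s : Finset ℕ, ↑s ⊆ X → (∀ x ∈ s, N < x) → IsSize F δ s →
      ∀ t : Finset ℕ, IsPrefixOf t s → IsSize F γ t → d s = c t)
    (H : Set ℕ) (hHX : H ⊆ {x ∈ X | N < x}) (hH : H.Infinite)
    (i : ι) (hd : ∀ s : Finset ℕ, ↑s ⊆ H → IsSize F δ s → d s = i)
    (t : Finset ℕ) (htH : ↑t ⊆ H) (ht : IsSize F γ t) : c t = i := by
  have habove : ∀ s : Finset ℕ, ↑s ⊆ H → ∀ x ∈ s, N < x := fun s hsH x hx => (hHX (hsH hx)).2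
  obtain ⟨s, hsH, hts, hs⟩ := exists_isSize_extension_of_isSize hself hH
    (fun s hsH => hlarge s (habove s hsH)) htH ht
  rw [← hcd s (fun x hx => (hHX (hsH hx)).1) (habove s hsH) hs t hts ht, hd s hsH hs]

end Extension

open Classical in
/-- The paper's `d(s) = c(t)`; the fallback `c s` when `s` has no such segment `t` is never used. -/
noncomputable def prefixColoring {ι : Type*} (P : Finset ℕ → Prop) (c : Finset ℕ → ι)
    (s : Finset ℕ) : ι :=
  if h : ∃ t, IsPrefixOf t s ∧ P t then c h.choose else c s

lemma prefixColoring_eq {ι : Type*} {P : Finset ℕ → Prop} (c : Finset ℕ → ι) {s t : Finset ℕ}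
    (huniq : ∃! t, IsPrefixOf t s ∧ P t) (ht : IsPrefixOf t s) (hPt : P t) :
    prefixColoring P c s = c t := by
  have hex : ∃ t, IsPrefixOf t s ∧ P t := ⟨t, ht, hPt⟩
  rw [prefixColoring, dif_pos hex, huniq.unique hex.choose_spec ⟨ht, hPt⟩]

lemma Set.Infinite.sep_lt {X : Set ℕ} (hX : X.Infinite) (N : ℕ) : {x ∈ X | N < x}.Infinite :=
  (hX.sdiff (Set.finite_Iic N)).mono fun _ hx => ⟨hx.1, not_le.1 hx.2⟩

theorem rt_downward_reduction_general
    (F : Ordinal → ℕ → Ordinal)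
    (hself : ∀ (α : Ordinal) (n : ℕ), α ≠ 0 → F α n < α)
    (Nrm : Ordinal → ℕ)
    (hNrmLarge : ∀ β δ : Ordinal, β < δ → ∀ s : Finset ℕ,
      (∀ x ∈ s, Nrm β ≤ x) → IsLarge F δ s → IsLarge F β s)
    (hNrmPrefix : ∀ β δ : Ordinal, β < δ → ∀ s : Finset ℕ,
      (∀ x ∈ s, Nrm β ≤ x) → IsLarge F δ s →
        ∃! t : Finset ℕ, IsPrefixOf t s ∧ IsSize F β t)
    (α β : Ordinal) (hβα : β < α) (k : ℕ) :
    (RTsize F (omega0 ^ α) k → RTsize F (omega0 ^ β) k) ∧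
    (∀ X : Set ℕ, X.Infinite → ∀ c d : Finset ℕ → Fin k,
      (∀ s : Finset ℕ, ↑s ⊆ X → (∀ x ∈ s, Nrm (omega0 ^ β) < x) →
        IsSize F (omega0 ^ α) s →
        ∀ t : Finset ℕ, IsPrefixOf t s → IsSize F (omega0 ^ β) t → d s = c t) →
      ∀ H : Set ℕ, H ⊆ {x ∈ X | Nrm (omega0 ^ β) < x} → H.Infinite →
        (∃ i : Fin k, ∀ s : Finset ℕ, ↑s ⊆ H → IsSize F (omega0 ^ α) s → d s = i) →
        ∃ i : Fin k, ∀ t : Finset ℕ, ↑t ⊆ H → IsSize F (omega0 ^ β) t → c t = i) := by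
  have hlt : omega0 ^ β < omega0 ^ α := (opow_lt_opow_iff_right one_lt_omega0).2 hβα
  have hlarge : ∀ s : Finset ℕ, (∀ x ∈ s, Nrm (omega0 ^ β) < x) →
      IsLarge F (omega0 ^ α) s → IsLarge F (omega0 ^ β) s :=
    fun s hs => hNrmLarge _ _ hlt s fun x hx => (hs x hx).le
  refine ⟨fun hRT X hX c => ?_, fun X _ c d hcd H hHX hH ⟨i, hd⟩ =>
    ⟨i, forall_isSize_eq_of_prefix_coloring hself hlarge X c d hcd H hHX hH i hd⟩⟩
  obtain ⟨H, hHX, hH, i, hd⟩ :=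
    hRT _ (hX.sep_lt (Nrm (omega0 ^ β))) (prefixColoring (IsSize F (omega0 ^ β)) c)
  refine ⟨H, fun x hx => (hHX hx).1, hH, i,
    forall_isSize_eq_of_prefix_coloring hself hlarge X c _ ?_ H hHX hH i hd⟩
  intro s _ hsN hs t hts ht
  exact prefixColoring_eq c (hNrmPrefix _ _ hlt s (fun x hx => (hsN x hx).le) hs.1) hts ht

/-- Downward dimension reduction: for `β < α`, `RT^{!ω^α}_k` implies `RT^{!ω^β}_k`;
moreover, for any coloring `c` of the `ω^β`-size subsets of an infinite `X`, any
coloring `d` of the `ω^α`-size subsets above the norm `|ω^β|` defined by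
`d(s) = c(t)` for `t` the unique `ω^β`-size initial segment of `s` is such that every
infinite homogeneous set for `d` is homogeneous for `c`. -/
theorem rt_downward_reduction
    (F : Ordinal → ℕ → Ordinal)
    (h0 : ∀ n : ℕ, F 0 n = 0)
    (hsucc : ∀ (α : Ordinal) (n : ℕ), F (α + 1) n = α)
    (hself : ∀ (α : Ordinal) (n : ℕ), α ≠ 0 → F α n < α)
    (hnested : Nested F)
    (Nrm : Ordinal → ℕ)
    (hNrmLarge : ∀ β δ : Ordinal, β < δ → ∀ s : Finset ℕ,
      (∀ x ∈ s, Nrm β ≤ x) → IsLarge F δ s → IsLarge F β s)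
    (hNrmPrefix : ∀ β δ : Ordinal, β < δ → ∀ s : Finset ℕ,
      (∀ x ∈ s, Nrm β ≤ x) → IsLarge F δ s →
        ∃! t : Finset ℕ, IsPrefixOf t s ∧ IsSize F β t)
    (α β : Ordinal) (hβα : β < α) (k : ℕ) (hk : 1 ≤ k) :
    (RTsize F (omega0 ^ α) k → RTsize F (omega0 ^ β) k) ∧
    (∀ X : Set ℕ, X.Infinite → ∀ c d : Finset ℕ → Fin k,
      (∀ s : Finset ℕ, ↑s ⊆ X → (∀ x ∈ s, Nrm (omega0 ^ β) < x) →
        IsSize F (omega0 ^ α) s →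
        ∀ t : Finset ℕ, IsPrefixOf t s → IsSize F (omega0 ^ β) t → d s = c t) →
      ∀ H : Set ℕ, H ⊆ {x ∈ X | Nrm (omega0 ^ β) < x} → H.Infinite →
        (∃ i : Fin k, ∀ s : Finset ℕ, ↑s ⊆ H → IsSize F (omega0 ^ α) s → d s = i) →
        ∃ i : Fin k, ∀ t : Finset ℕ, ↑t ⊆ H → IsSize F (omega0 ^ β) t → c t = i) :=
  rt_downward_reduction_general F hself Nrm hNrmLarge hNrmPrefix α β hβα k
end

section
/- Pigeonhole for the jump-coding coloring: for every ordinal β in the notation system, every infinite homogeneous set H for the coloring c_{β+3} has color 1. (Proof idea: pick a_0 < a_1 < ... < a_{(a_0)^2+2} in H followed by a β-size subset s of H; if all triples were colored 0, each consecutive pair (a_i, a_{i+1}) would be separated by a distinct pair (e,x) with e,x < a_0, but there are at most (a_0)^2 such pairs.) -/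
open Ordinal

/-- The maximum of a list of naturals (0 for the empty list). -/
def listMax (s : List ℕ) : ℕ := s.foldr max 0

/-- `t` (as an increasing sequence) is `α`-large. -/
def LargeL (F : Ordinal → ℕ → Ordinal) (α : Ordinal) (t : List ℕ) : Prop :=
  t.foldl F α = 0

/-- `t` is exactly `α`-large (`α`-size). -/
def SizeL (F : Ordinal → ℕ → Ordinal) (α : Ordinal) (t : List ℕ) : Prop :=
  LargeL F α t ∧ (t ≠ [] → ¬ LargeL F α t.dropLast)

/-- `Y^s_β = {y ≤ max s : M_β(y,s) accepts}`. -/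
def Yset (M : Ordinal → ℕ → List ℕ → Prop) (β : Ordinal) (s : List ℕ) : Set ℕ :=
  {y | y ≤ listMax s ∧ M β y s}

/-! If the color were `0`, take `a₀ < a₁ < ⋯ < a_{a₀²+2}` in `H` followed by a `β`-size `s ⊆ H`.
Each triple `⟨a₀, a_{j+1}, a_{j+2}⟩⌢s` is colored `0`, so some pair `(e, x)` with `e, x < a₀`
has `HBx e x Y^s_β b` ("`{e}^{Y^s_β}(x)` halts with code below `b`", monotone in `b`) switch on between
`b = a_{j+1}` and `b = a_{j+2}`.
A monotone predicate switches on only once, so these `a₀² + 1` pairs are distinct, which is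
impossible. -/

theorem sizeL_cons (F : Ordinal → ℕ → Ordinal) {α : Ordinal} (hα : α ≠ 0) (a : ℕ) (t : List ℕ) :
    SizeL F α (a :: t) ↔ SizeL F (F α a) t := by
  cases t with
  | nil => simp [SizeL, LargeL, hα]
  | cons b t => simp [SizeL, LargeL, List.dropLast_cons_cons]

theorem sizeL_cons_cons_cons (F : Ordinal → ℕ → Ordinal)
    (hsucc : ∀ (α : Ordinal) (n : ℕ), F (α + 1) n = α)
    {β : Ordinal} (a₀ a₁ a₂ : ℕ) {s : List ℕ} (hs : SizeL F β s) :
    SizeL F (β + 3) (a₀ :: a₁ :: a₂ :: s) := by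
  have h3 : β + 3 = β + 2 + 1 := by rw [add_assoc]; norm_num
  have h2 : β + 2 = β + 1 + 1 := by rw [add_assoc]; norm_num
  rw [sizeL_cons F (by simp [h3]), h3, hsucc, sizeL_cons F (by simp [h2]), h2, hsucc,
    sizeL_cons F (by simp), hsucc]
  exact hs

theorem exists_sizeL_of_infinite (F : Ordinal → ℕ → Ordinal)
    (hself : ∀ (α : Ordinal) (n : ℕ), α ≠ 0 → F α n < α) {H : Set ℕ} (hH : H.Infinite)
    (α : Ordinal) (m : ℕ) :
    ∃ t : List ℕ, t.Pairwise (· < ·) ∧ (∀ x ∈ t, x ∈ H) ∧ (∀ x ∈ t, m < x) ∧ SizeL F α t := by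
  induction α using WellFoundedLT.induction generalizing m with
  | _ α ih =>
    rcases eq_or_ne α 0 with rfl | hα
    · exact ⟨[], .nil, by simp, by simp, rfl, by simp⟩
    obtain ⟨a, haH, hma⟩ := hH.exists_gt m
    obtain ⟨t, ht_lt, htH, hat, ht_size⟩ := ih (F α a) (hself α a hα) a
    refine ⟨a :: t, List.pairwise_cons.2 ⟨hat, ht_lt⟩, ?_, ?_, (sizeL_cons F hα a t).2 ht_size⟩
    · simpa [haH] using htH
    · simpa [hma] using fun x hx => hma.trans (hat x hx)

theorem pairwise_lt_cons_cons_cons {α : Type*} [Preorder α] {a₀ a₁ a₂ : α} {s : List α}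
    (h₀₁ : a₀ < a₁) (h₁₂ : a₁ < a₂) (h₂ : ∀ x ∈ s, a₂ < x) (hs : s.Pairwise (· < ·)) :
    (a₀ :: a₁ :: a₂ :: s).Pairwise (· < ·) := by
  simp only [List.pairwise_cons, List.mem_cons, forall_eq_or_imp]
  exact ⟨⟨h₀₁, h₀₁.trans h₁₂, fun x hx => (h₀₁.trans h₁₂).trans (h₂ x hx)⟩,
    ⟨h₁₂, fun x hx => h₁₂.trans (h₂ x hx)⟩, h₂, hs⟩

theorem le_card_of_separating {ι : Type*} [Fintype ι] (P : ι → ℕ → Prop)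
    (hP : ∀ k, Monotone (P k)) {b : ℕ → ℕ} (hb : Monotone b) {n : ℕ}
    (hsep : ∀ j < n, ∃ k, ¬ P k (b j) ∧ P k (b (j + 1))) : n ≤ Fintype.card ι := by
  choose k hk using hsep
  have hinj : Function.Injective fun j : Fin n => k j j.2 := by
    intro j j' hjj'
    by_contra hne
    wlog hlt : (j : ℕ) < j' generalizing j j'
    · exact this hjj'.symm (Ne.symm hne) (by omega)
    have hk' : k j j.2 = k j' j'.2 := hjj'
    exact (hk j' j'.2).1 (hk' ▸ hP _ (hb hlt) (hk j j.2).2)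
  simpa using Fintype.card_le_of_injective _ hinj

theorem homogeneous_set_has_color_one_general
    (F : Ordinal → ℕ → Ordinal)
    (hsucc : ∀ (α : Ordinal) (n : ℕ), F (α + 1) n = α)
    (hself : ∀ (α : Ordinal) (n : ℕ), α ≠ 0 → F α n < α)
    (M : Ordinal → ℕ → List ℕ → Prop)
    (HBx : ℕ → ℕ → Set ℕ → ℕ → Prop)
    (hHBmono : ∀ (e x : ℕ) (Y : Set ℕ) (b b' : ℕ), b ≤ b' → HBx e x Y b → HBx e x Y b')
    (β : Ordinal)
    (c : List ℕ → Fin 2)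
    (hc : ∀ (a0 a1 a2 : ℕ) (s : List ℕ), SizeL F (β + 3) (a0 :: a1 :: a2 :: s) →
      (c (a0 :: a1 :: a2 :: s) = 1 ↔
        ∀ e x : ℕ, e < a0 → x < a0 →
          (HBx e x (Yset M β s) a1 ↔ HBx e x (Yset M β s) a2)))
    (H : Set ℕ) (hH : H.Infinite)
    (i : Fin 2)
    (hhom : ∀ u : List ℕ, u.Pairwise (· < ·) → (∀ x ∈ u, x ∈ H) →
      SizeL F (β + 3) u → c u = i) :
    i = 1 := by
  by_contra hi
  set a : ℕ → ℕ := Nat.nth (· ∈ H)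
  have ha_mem : ∀ j, a j ∈ H := Nat.nth_mem_of_infinite hH
  have ha_mono : StrictMono a := Nat.nth_strictMono hH
  set n := a 0 * a 0 + 1
  obtain ⟨s, hs_lt, hs_H, hs_gt, hs_size⟩ := exists_sizeL_of_infinite F hself hH β (a (n + 1))
  set Y := Yset M β s
  have hsep : ∀ j < n, ∃ k : Fin (a 0) × Fin (a 0),
      ¬ HBx k.1 k.2 Y (a (j + 1)) ∧ HBx k.1 k.2 Y (a (j + 2)) := by
    intro j hj
    have hu := sizeL_cons_cons_cons F hsucc (a 0) (a (j + 1)) (a (j + 2)) hs_size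
    have hu_lt := pairwise_lt_cons_cons_cons (ha_mono j.succ_pos) (ha_mono (j + 1).lt_succ_self)
      (fun x hx => (ha_mono.monotone (show j + 2 ≤ n + 1 by omega)).trans_lt (hs_gt x hx)) hs_lt
    have hcu : c _ ≠ 1 := (hhom _ hu_lt (by simpa [ha_mem] using hs_H) hu).trans_ne hi
    obtain ⟨e, x, he, hx, hdiff⟩ : ∃ e x, e < a 0 ∧ x < a 0 ∧
        ¬ (HBx e x Y (a (j + 1)) ↔ HBx e x Y (a (j + 2))) := by
      simpa using (hc _ _ _ _ hu).not.mp hcu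
    have := hHBmono e x Y _ _ (ha_mono.monotone (Nat.le_succ (j + 1)))
    exact ⟨(⟨e, he⟩, ⟨x, hx⟩), by tauto⟩
  have hcard := le_card_of_separating (fun k : Fin (a 0) × Fin (a 0) => HBx k.1 k.2 Y) (fun k _ _ h => hHBmono _ _ _ _ _ h)
    (ha_mono.monotone.comp (add_left_mono)) hsep
  simp only [Fintype.card_prod, Fintype.card_fin] at hcard
  omega

/-- Pigeonhole for the jump-coding coloring: every infinite homogeneous set for the
coloring `c_{β+3}` has color `1`.  Here `HBx e x Y b` abstracts "`{e}^Y(x)` halts with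
computation code below `b`", and `c` is any coloring satisfying the defining property
of `c_{β+3}` on `(β+3)`-size sets `⟨a₀,a₁,a₂⟩⌢s`. -/
theorem homogeneous_set_has_color_one
    (F : Ordinal → ℕ → Ordinal)
    (h0 : ∀ n : ℕ, F 0 n = 0)
    (hsucc : ∀ (α : Ordinal) (n : ℕ), F (α + 1) n = α)
    (hself : ∀ (α : Ordinal) (n : ℕ), α ≠ 0 → F α n < α)
    (A : Set ℕ)
    (M : Ordinal → ℕ → List ℕ → Prop)
    (HBx : ℕ → ℕ → Set ℕ → ℕ → Prop)
    (hHBmono : ∀ (e x : ℕ) (Y : Set ℕ) (b b' : ℕ), b ≤ b' → HBx e x Y b → HBx e x Y b')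
    (β : Ordinal)
    (c : List ℕ → Fin 2)
    (hc : ∀ (a0 a1 a2 : ℕ) (s : List ℕ), SizeL F (β + 3) (a0 :: a1 :: a2 :: s) →
      (c (a0 :: a1 :: a2 :: s) = 1 ↔
        ∀ e x : ℕ, e < a0 → x < a0 →
          (HBx e x (Yset M β s) a1 ↔ HBx e x (Yset M β s) a2)))
    (H : Set ℕ) (hH : H.Infinite)
    (i : Fin 2)
    (hhom : ∀ u : List ℕ, u.Pairwise (· < ·) → (∀ x ∈ u, x ∈ H) →
      SizeL F (β + 3) u → c u = i) :
    i = 1 :=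
  homogeneous_set_has_color_one_general F hsucc hself M HBx hHBmono β c hc H hH i hhom
end

section
/- Scattering interval property: let X ⊆ ℕ be infinite, α an ordinal in the notation system, and let S(α,X) = {a_0 < a_1 < a_2 < ...} be the α-scattering of X. Then: (1) for each β ≤ α and each i, if |β| ≤ a_i then there exists a set s of consecutive elements of X contained in the open interval (a_i, a_{i+1}) with α[s] = β; (2) for each γ ≤ β ≤ α and each i, if |β| ≤ a_i and |γ| ≤ a_i, then there exists a set s of consecutive elements of X in (a_i, a_{i+1}) with β[s] = γ. -/
open Ordinal

/-!
Between `a_i` and `a_{i+1}` the scattering leaves an `α`-size block `s` of consecutive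
elements of `X`, all at least `a_i`. Since `α[s] = 0 ≤ β` and `|β| ≤ a_i ≤ min s`, the norm
property yields a prefix `t` of `s` with `α[t] = β`; this is (1). The remaining suffix `u`
satisfies `β[u] = α[s] = 0 ≤ γ`, so the norm property applied once more yields a prefix of
`u` sent by `β[·]` to `γ`; this is (2).
Here `a_i = eX (idx i)` and the block is `run eX (idx i + 4) L`.
-/

def run (e : ℕ → ℕ) (j L : ℕ) : List ℕ :=
  (List.range L).map fun m => e (j + m)

section Run

variable (e : ℕ → ℕ) (j : ℕ)

lemma run_take (k L : ℕ) : (run e j L).take k = run e j (min k L) := by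
  rw [run, ← List.map_take, List.take_range, run]

lemma run_append (k n : ℕ) : run e j k ++ run e (j + k) n = run e j (k + n) := by
  simp only [run, List.range_add, List.map_append, List.map_map, Function.comp_def,
    Nat.add_assoc]

lemma eq_run_of_prefix {L : ℕ} {t : List ℕ} (h : t <+: run e j L) :
    t.length ≤ L ∧ t = run e j t.length := by
  have hlen : t.length ≤ L := by simpa [run] using h.length_le
  refine ⟨hlen, ?_⟩
  conv_lhs => rw [List.prefix_iff_eq_take.mp h, run_take, Nat.min_eq_left hlen]

variable {e} in
lemma le_of_mem_run (he : Monotone e) {L x : ℕ} (hx : x ∈ run e j L) : e j ≤ x := by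
  obtain ⟨m, -, rfl⟩ := List.mem_map.mp hx
  exact he (Nat.le_add_right j m)

end Run

theorem exists_run_foldl_eq_of_largeL {F : Ordinal → ℕ → Ordinal} {Λ : Ordinal} {Nrm : Ordinal → ℕ}
    (hNrm : ∀ β δ : Ordinal, β < δ → δ ≤ Λ → ∀ s : List ℕ,
      s.foldl F δ ≤ β → (∀ x ∈ s, Nrm β ≤ x) →
        ∃ t : List ℕ, t <+: s ∧ t.foldl F δ = β)
    {δ β : Ordinal} (hδ : δ ≤ Λ) (hβ : β ≤ δ)
    {e : ℕ → ℕ} (he : Monotone e) {j L : ℕ}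
    (hlarge : LargeL F δ (run e j L)) (hnorm : Nrm β ≤ e j) :
    ∃ k ≤ L, (run e j k).foldl F δ = β ∧ LargeL F β (run e (j + k) (L - k)) := by
  obtain ⟨k, hkL, hfold⟩ : ∃ k ≤ L, (run e j k).foldl F δ = β := by
    rcases hβ.eq_or_lt with rfl | hlt
    · exact ⟨0, Nat.zero_le L, rfl⟩
    obtain ⟨t, hprefix, hfold⟩ := hNrm β δ hlt hδ (run e j L)
      (Eq.trans_le hlarge zero_le) fun x hx => hnorm.trans (le_of_mem_run j he hx)
    obtain ⟨hlen, ht⟩ := eq_run_of_prefix e j hprefix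
    exact ⟨t.length, hlen, ht ▸ hfold⟩
  refine ⟨k, hkL, hfold, ?_⟩
  rw [LargeL, ← hfold, ← List.foldl_append, run_append, Nat.add_sub_cancel' hkL]
  exact hlarge

theorem scattering_interval_property_general
    (F : Ordinal → ℕ → Ordinal)
    (Λ : Ordinal) (Nrm : Ordinal → ℕ)
    (hNrm : ∀ β δ : Ordinal, β < δ → δ ≤ Λ → ∀ s : List ℕ,
      s.foldl F δ ≤ β → (∀ x ∈ s, Nrm β ≤ x) →
        ∃ t : List ℕ, t <+: s ∧ t.foldl F δ = β)
    (eX : ℕ → ℕ) (heX : StrictMono eX)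
    (α : Ordinal) (hα : α ≤ Λ)
    (idx : ℕ → ℕ)
    (hstep : ∀ i : ℕ, ∃ L : ℕ, idx (i + 1) = idx i + 4 + L ∧
      SizeL F α ((List.range L).map fun m => eX (idx i + 4 + m))) :
    (∀ β : Ordinal, β ≤ α → ∀ i : ℕ, Nrm β ≤ eX (idx i) →
      ∃ j L : ℕ,
        (∀ m < L, eX (idx i) < eX (j + m) ∧ eX (j + m) < eX (idx (i + 1))) ∧
        ((List.range L).map fun m => eX (j + m)).foldl F α = β) ∧
    (∀ γ β : Ordinal, γ ≤ β → β ≤ α → ∀ i : ℕ,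
      Nrm β ≤ eX (idx i) → Nrm γ ≤ eX (idx i) →
      ∃ j L : ℕ,
        (∀ m < L, eX (idx i) < eX (j + m) ∧ eX (j + m) < eX (idx (i + 1))) ∧
        ((List.range L).map fun m => eX (j + m)).foldl F β = γ) := by
  have hstart : ∀ i, eX (idx i) ≤ eX (idx i + 4) := fun i => heX.monotone (by omega)
  constructor
  · intro β hβα i hnβ
    obtain ⟨L, hL, hsize⟩ := hstep i
    obtain ⟨k, hkL, hfold, -⟩ :=
      exists_run_foldl_eq_of_largeL hNrm hα hβα heX.monotone hsize.1 (hnβ.trans (hstart i))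
    refine ⟨idx i + 4, k, fun m hm => ⟨heX (by omega), ?_⟩, hfold⟩
    rw [hL]; exact heX (by omega)
  · intro γ β hγβ hβα i hnβ hnγ
    obtain ⟨L, hL, hsize⟩ := hstep i
    obtain ⟨k, hkL, -, hrest⟩ :=
      exists_run_foldl_eq_of_largeL hNrm hα hβα heX.monotone hsize.1 (hnβ.trans (hstart i))
    obtain ⟨k', hk', hfold, -⟩ := exists_run_foldl_eq_of_largeL hNrm (hβα.trans hα) hγβ heX.monotone
      hrest (hnγ.trans (heX.monotone (by omega)))
    refine ⟨idx i + 4 + k, k', fun m hm => ⟨heX (by omega), ?_⟩, hfold⟩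
    rw [hL]; exact heX (by omega)

/-- Scattering interval property.  Let `eX` enumerate the infinite set `X` in increasing
order and let `idx` pick out the indices of the `α`-scattering `S(α,X)`, i.e.
`a_i = eX (idx i)`, where between `a_i` and `a_{i+1}` one skips three elements of `X`
and then an `α`-size block of consecutive elements of `X`.  Then: (1) for `β ≤ α` and
any `i` with `|β| ≤ a_i` there is a set of consecutive elements of `X` inside the
interval `(a_i, a_{i+1})` sent by `α[·]` to `β`; (2) for `γ ≤ β ≤ α` and `i` with
`|β|, |γ| ≤ a_i`, there is such a set sent by `β[·]` to `γ`. -/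
theorem scattering_interval_property
    (F : Ordinal → ℕ → Ordinal)
    (h0 : ∀ n : ℕ, F 0 n = 0)
    (hsucc : ∀ (α : Ordinal) (n : ℕ), F (α + 1) n = α)
    (hself : ∀ (α : Ordinal) (n : ℕ), α ≠ 0 → F α n < α)
    (hnested : Nested F)
    (Λ : Ordinal) (Nrm : Ordinal → ℕ)
    (hNrm : ∀ β δ : Ordinal, β < δ → δ ≤ Λ → ∀ s : List ℕ,
      s.foldl F δ ≤ β → (∀ x ∈ s, Nrm β ≤ x) →
        ∃ t : List ℕ, t <+: s ∧ t.foldl F δ = β)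
    (X : Set ℕ) (eX : ℕ → ℕ) (heX : StrictMono eX) (hrange : Set.range eX = X)
    (α : Ordinal) (hα : α ≤ Λ)
    (idx : ℕ → ℕ) (hidx0 : idx 0 = 0)
    (hstep : ∀ i : ℕ, ∃ L : ℕ, idx (i + 1) = idx i + 4 + L ∧
      SizeL F α ((List.range L).map fun m => eX (idx i + 4 + m))) :
    (∀ β : Ordinal, β ≤ α → ∀ i : ℕ, Nrm β ≤ eX (idx i) →
      ∃ j L : ℕ,
        (∀ m < L, eX (idx i) < eX (j + m) ∧ eX (j + m) < eX (idx (i + 1))) ∧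
        ((List.range L).map fun m => eX (j + m)).foldl F α = β) ∧
    (∀ γ β : Ordinal, γ ≤ β → β ≤ α → ∀ i : ℕ,
      Nrm β ≤ eX (idx i) → Nrm γ ≤ eX (idx i) →
      ∃ j L : ℕ,
        (∀ m < L, eX (idx i) < eX (j + m) ∧ eX (j + m) < eX (idx (i + 1))) ∧
        ((List.range L).map fun m => eX (j + m)).foldl F β = γ) :=
  scattering_interval_property_general F Λ Nrm hNrm eX heX α hα idx hstep
end
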